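/- arXiv:2510.16277 — 3 statements merged into one kernel-verified Lean document; each statement's English description precedes it below -/
import Mathlib

section
/- Let q be a real number with q > 1, and let k, s be nonnegative integers. Then the coefficient of u^s in the formal power series (over ℝ) Π_{j=0}^{k-1} (1 - u q^{-2j-1})^{-1} equals ( (q^{-2k}; q^{-2})_s / (q^{-2}; q^{-2})_s ) · q^{-s}. -/
/-!
Write `x = q⁻¹` and `Q = q⁻²`, so the `j`-th factor is `(1 - x Q^j u)⁻¹`. Multiplying the product
over `j < k + 1` by `1 - x Q^k u` gives the product over `j < k`, so the coefficients `c k s`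
satisfy `c (k+1) (s+1) = c k (s+1) + x Q^k c (k+1) s`. After clearing the denominator
`(Q; Q)_s`, the closed form `x^s (Q^k; Q)_s` satisfies the same recurrence, which is the
q-Pascal identity `(1 - Q^k) + Q^k (1 - Q^{s+1}) = 1 - Q^{k+s+1}`.
-/

/-- The q-Pochhammer symbol `(a; Q)_n = ∏_{j=0}^{n-1} (1 - a Q^j)` over the reals. -/
noncomputable def qPoch (a Q : ℝ) (n : ℕ) : ℝ := ∏ j ∈ Finset.range n, (1 - a * Q ^ j)

open PowerSeries

section QPochhammer

lemma qPoch_zero (a Q : ℝ) : qPoch a Q 0 = 1 := Finset.prod_range_zero _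

lemma qPoch_succ (a Q : ℝ) (n : ℕ) : qPoch a Q (n + 1) = qPoch a Q n * (1 - a * Q ^ n) :=
  Finset.prod_range_succ _ _

lemma qPoch_succ' (a Q : ℝ) (n : ℕ) : qPoch a Q (n + 1) = (1 - a) * qPoch (a * Q) Q n := by
  rw [qPoch, Finset.prod_range_succ', pow_zero, mul_one, mul_comm, qPoch]
  congr 1
  exact Finset.prod_congr rfl fun j _ => by rw [pow_succ', mul_assoc]

lemma qPoch_one_succ (Q : ℝ) (n : ℕ) : qPoch 1 Q (n + 1) = 0 := by
  rw [qPoch_succ', sub_self, zero_mul]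

lemma qPoch_pos {a Q : ℝ} (ha : a < 1) (hQ₀ : 0 ≤ Q) (hQ₁ : Q ≤ 1) (n : ℕ) : 0 < qPoch a Q n := by
  refine Finset.prod_pos fun j _ => ?_
  have h₀ : 0 ≤ Q ^ j := pow_nonneg hQ₀ j
  have h₁ : Q ^ j ≤ 1 := pow_le_one₀ hQ₀ hQ₁
  rcases le_or_gt 0 a with ha₀ | ha₀ <;> nlinarith

end QPochhammer

section GeometricProduct

lemma coeff_succ_of_mul_one_sub_C_mul_X_eq {R : Type*} [CommRing R] {f g : R⟦X⟧} {a : R}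
    (h : g * (1 - C a * X) = f) (n : ℕ) :
    coeff (n + 1) g = coeff (n + 1) f + a * coeff n g := by
  rw [← h, mul_sub, mul_one, ← mul_assoc, mul_comm g, mul_assoc, map_sub, coeff_C_mul,
    coeff_succ_mul_X]
  ring

lemma constantCoeff_one_sub_C_mul_X {R : Type*} [CommRing R] (a : R) :
    constantCoeff (1 - C a * X) = 1 := by
  simp

lemma prod_range_succ_inv_one_sub_C_mul_X_mul {K : Type*} [Field K] (a : ℕ → K) (k : ℕ) :
    (∏ j ∈ Finset.range (k + 1), (1 - C (a j) * X)⁻¹) * (1 - C (a k) * X)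
      = ∏ j ∈ Finset.range k, (1 - C (a j) * X)⁻¹ := by
  rw [Finset.prod_range_succ, mul_assoc, PowerSeries.inv_mul_cancel _
    (by rw [constantCoeff_one_sub_C_mul_X]; exact one_ne_zero), mul_one]

theorem qPoch_mul_coeff_prod_inv_one_sub_C_mul_X (x Q : ℝ) (k s : ℕ) :
    qPoch Q Q s * coeff s (∏ j ∈ Finset.range k, (1 - C (x * Q ^ j) * X)⁻¹)
      = x ^ s * qPoch (Q ^ k) Q s := by
  induction k generalizing s with
  | zero =>
    cases s with
    | zero => simp [qPoch_zero]
    | succ s => simp [qPoch_one_succ]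
  | succ k ihk =>
    induction s with
    | zero => simp [qPoch_zero]
    | succ s ihs =>
      have hrec := coeff_succ_of_mul_one_sub_C_mul_X_eq
        (prod_range_succ_inv_one_sub_C_mul_X_mul (fun j => x * Q ^ j) k) s
      rw [hrec, mul_add, ihk, qPoch_succ' (Q ^ k), ← pow_succ, qPoch_succ (Q ^ (k + 1)),
        qPoch_succ Q Q s]
      linear_combination (x * Q ^ k * (1 - Q * Q ^ s)) * ihs

end GeometricProduct

/-- The coefficient of `u^s` in the formal power series `∏_{j=0}^{k-1} (1 - u q^{-2j-1})⁻¹`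
is `((q^{-2k}; q^{-2})_s / (q^{-2}; q^{-2})_s) q^{-s}`. -/
theorem coeff_geometric_product (q : ℝ) (hq : 1 < q) (k s : ℕ) :
    PowerSeries.coeff (R := ℝ) s
      (∏ j ∈ Finset.range k,
        (1 - PowerSeries.C (R := ℝ) (q ^ (-(2 * (j : ℤ) + 1))) * PowerSeries.X)⁻¹)
    = qPoch (q ^ (-(2 * (k : ℤ)))) (q ^ (-2 : ℤ)) s
        / qPoch (q ^ (-2 : ℤ)) (q ^ (-2 : ℤ)) s * q ^ (-(s : ℤ)) := by
  have hq₀ : q ≠ 0 := (zero_lt_one.trans hq).ne'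
  set Q := q ^ (-2 : ℤ) with hQ
  have hfactor (j : ℕ) : q ^ (-(2 * (j : ℤ) + 1)) = q⁻¹ * Q ^ j := by
    rw [hQ, ← zpow_natCast, ← zpow_mul, ← zpow_neg_one, ← zpow_add₀ hq₀]
    ring_nf
  have hQk : q ^ (-(2 * (k : ℤ))) = Q ^ k := by
    rw [hQ, ← zpow_natCast, ← zpow_mul]
    ring_nf
  have hQpos : 0 < qPoch Q Q s :=
    qPoch_pos (zpow_lt_one_of_neg₀ hq (by norm_num)) (by positivity)
      (zpow_le_one_of_nonpos₀ hq.le (by norm_num)) s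
  simp_rw [hfactor, hQk, zpow_neg, zpow_natCast, ← inv_pow]
  rw [div_mul_eq_mul_div, eq_div_iff hQpos.ne', mul_comm,
    qPoch_mul_coeff_prod_inv_one_sub_C_mul_X, mul_comm]
end

section
/- Let q be a real number with q > 1 and m ≥ 1 an integer. For 1 ≤ k ≤ m define b2_k = q^{-2k^2+k} / (q^{-2};q^{-2})_{k-1} · ( (q^{-2k};q^{-2})_{m-k} / (q^{-2};q^{-2})_{m-k} ) · q^{-m+k}. Then Σ_{k=1}^{m} b2_k = q^{-m} · Σ_{s=0}^{m-1} (-1)^s ( (q^{2m-2}; q^{-2})_s / ( (q^{-2}; q^{-2})_s )^2 ) · q^{-s^2 - s - 2sm}. -/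
lemma prod_zpow_sum (q : ℝ) (hq : q ≠ 0) (f : ℕ → ℤ) (n : ℕ) :
    ∏ j ∈ Finset.range n, q ^ f j = q ^ (∑ j ∈ Finset.range n, f j) := by
  induction n with
  | zero => simp
  | succ n ih => rw [Finset.prod_range_succ, Finset.sum_range_succ, ih, zpow_add₀ hq]

lemma sum_aux (m s : ℕ) :
    ∑ j ∈ Finset.range s, (2 * (m:ℤ) - 2 - 2 * (j:ℤ)) = 2 * (s:ℤ) * m - s ^ 2 - s := by
  induction s with
  | zero => simp
  | succ s ih => rw [Finset.sum_range_succ, ih]; push_cast; ring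

lemma qPoch_pow_eq (q : ℝ) (hq : q ≠ 0) (a : ℤ) (n : ℕ) :
    qPoch (q ^ a) (q ^ (-2:ℤ)) n = ∏ j ∈ Finset.range n, (1 - q ^ (a - 2 * (j:ℤ))) := by
  unfold qPoch
  refine Finset.prod_congr rfl fun j _ => ?_
  rw [← zpow_natCast (q ^ (-2:ℤ)) j, ← zpow_mul, ← zpow_add₀ hq]
  ring_nf

lemma P_pos (q : ℝ) (hq : 1 < q) (n : ℕ) : 0 < qPoch (q ^ (-2:ℤ)) (q ^ (-2:ℤ)) n := by
  rw [qPoch_pow_eq q (by positivity) (-2) n]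
  refine Finset.prod_pos fun j _ => ?_
  have : q ^ (-2 - 2 * (j:ℤ)) < 1 := zpow_lt_one_of_neg₀ hq (by omega)
  linarith

lemma split_lemma (q : ℝ) (hq : q ≠ 0) (k m : ℕ) (hk : 1 ≤ k) (hkm : k ≤ m) :
    qPoch (q ^ (-(2 * (k:ℤ)))) (q ^ (-2:ℤ)) (m - k) * qPoch (q ^ (-2:ℤ)) (q ^ (-2:ℤ)) (k - 1)
      = qPoch (q ^ (-2:ℤ)) (q ^ (-2:ℤ)) (m - 1) := by
  rw [qPoch_pow_eq q hq, qPoch_pow_eq q hq, qPoch_pow_eq q hq,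
    show m - 1 = (k - 1) + (m - k) by omega, Finset.prod_range_add, mul_comm]
  congr 1
  refine Finset.prod_congr rfl fun j _ => ?_
  congr 2
  omega

lemma flip_lemma (q : ℝ) (hq : q ≠ 0) (m s : ℕ) (hs : s < m) :
    qPoch (q ^ (2 * (m:ℤ) - 2)) (q ^ (-2:ℤ)) s * qPoch (q ^ (-2:ℤ)) (q ^ (-2:ℤ)) (m - 1 - s)
      = (-1) ^ s * q ^ (2 * (s:ℤ) * m - s ^ 2 - s) * qPoch (q ^ (-2:ℤ)) (q ^ (-2:ℤ)) (m - 1) := by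
  rw [qPoch_pow_eq q hq, qPoch_pow_eq q hq, qPoch_pow_eq q hq]
  have h1 : ∀ j ∈ Finset.range s,
      (1 - q ^ (2 * (m:ℤ) - 2 - 2 * (j:ℤ)))
        = (-1) * q ^ (2 * (m:ℤ) - 2 - 2 * (j:ℤ)) * (1 - q ^ (-(2 * (m:ℤ) - 2 - 2 * (j:ℤ)))) := by
    intro j _
    have hx : q ^ (2 * (m:ℤ) - 2 - 2 * (j:ℤ)) * q ^ (-(2 * (m:ℤ) - 2 - 2 * (j:ℤ))) = 1 := by
      rw [← zpow_add₀ hq]; simp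
    linear_combination -hx
  rw [Finset.prod_congr rfl h1, Finset.prod_mul_distrib, Finset.prod_mul_distrib,
    Finset.prod_const, prod_zpow_sum q hq, sum_aux]
  simp only [Finset.card_range]
  -- remaining: (-1)^s * q^E * (∏_{j<s} (1 - q^(-(2m-2-2j)))) * ∏_{j<m-1-s} (1 - q^(-2-2j))
  --          = (-1)^s * q^E * ∏_{j<m-1} (1 - q^(-2-2j))
  have h2 : (∏ j ∈ Finset.range (m - 1 - s), (1 - q ^ (-2 - 2 * (j:ℤ))))
      * ∏ j ∈ Finset.range s, (1 - q ^ (-(2 * (m:ℤ) - 2 - 2 * (j:ℤ))))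
      = ∏ j ∈ Finset.range (m - 1), (1 - q ^ (-2 - 2 * (j:ℤ))) := by
    conv_rhs => rw [show m - 1 = (m - 1 - s) + s by omega]
    rw [Finset.prod_range_add]
    congr 1
    rw [← Finset.prod_range_reflect (fun j => (1 - q ^ (-(2 * (m:ℤ) - 2 - 2 * (j:ℤ))))) s]
    refine Finset.prod_congr rfl fun j hj => ?_
    have hj' : j < s := Finset.mem_range.mp hj
    congr 2
    omega
  calc (-1:ℝ) ^ s * q ^ (2 * (s:ℤ) * m - s ^ 2 - s)
        * (∏ j ∈ Finset.range s, (1 - q ^ (-(2 * (m:ℤ) - 2 - 2 * (j:ℤ)))))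
        * ∏ j ∈ Finset.range (m - 1 - s), (1 - q ^ (-2 - 2 * (j:ℤ)))
      = (-1:ℝ) ^ s * q ^ (2 * (s:ℤ) * m - s ^ 2 - s)
        * ((∏ j ∈ Finset.range (m - 1 - s), (1 - q ^ (-2 - 2 * (j:ℤ))))
          * ∏ j ∈ Finset.range s, (1 - q ^ (-(2 * (m:ℤ) - 2 - 2 * (j:ℤ))))) := by ring
    _ = _ := by rw [h2]

theorem anzanello_b2_sum (q : ℝ) (hq : 1 < q) (m : ℕ) (hm : 1 ≤ m) :
    ∑ k ∈ Finset.Icc 1 m,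
      q ^ (-(2 * (k : ℤ) ^ 2) + k) / qPoch (q ^ (-2 : ℤ)) (q ^ (-2 : ℤ)) (k - 1)
        * (qPoch (q ^ (-(2 * (k : ℤ)))) (q ^ (-2 : ℤ)) (m - k)
            / qPoch (q ^ (-2 : ℤ)) (q ^ (-2 : ℤ)) (m - k))
        * q ^ (-(m : ℤ) + k)
    = q ^ (-(m : ℤ)) * ∑ s ∈ Finset.range m,
        (-1 : ℝ) ^ s
          * (qPoch (q ^ (2 * (m : ℤ) - 2)) (q ^ (-2 : ℤ)) s
              / (qPoch (q ^ (-2 : ℤ)) (q ^ (-2 : ℤ)) s) ^ 2)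
          * q ^ (-(s : ℤ) ^ 2 - s - 2 * s * m) := by
  have hq0 : (0:ℝ) < q := lt_trans one_pos hq
  have hqne : q ≠ 0 := ne_of_gt hq0
  rw [Finset.mul_sum, ← Finset.Ico_add_one_right_eq_Icc, Finset.sum_Ico_eq_sum_range]
  refine Finset.sum_congr rfl fun s hs => ?_
  have hs' : s < m := Finset.mem_range.mp hs
  have hsub1 : 1 + s - 1 = s := by omega
  have hsub2 : m - (1 + s) = m - 1 - s := by omega
  rw [hsub1, hsub2]
  have hPs := (P_pos q hq s).ne'
  have hPt := (P_pos q hq (m - 1 - s)).ne'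
  have hsplit := split_lemma q hqne (1 + s) m (by omega) (by omega)
  rw [hsub1, hsub2] at hsplit
  have hflip := flip_lemma q hqne m s hs'
  have hu : ((-1:ℝ) ^ s) * ((-1:ℝ) ^ s) = 1 := by
    rw [← pow_add, ← two_mul, pow_mul]
    norm_num
  have e1 : q ^ (-(2 * ((1 + s : ℕ) : ℤ) ^ 2) + ((1 + s : ℕ) : ℤ)) * q ^ (-(m : ℤ) + ((1 + s : ℕ) : ℤ))
      = q ^ (-(m : ℤ)) * (q ^ (2 * (s:ℤ) * m - (s:ℤ) ^ 2 - s) * q ^ (-(s : ℤ) ^ 2 - (s:ℤ) - 2 * s * m)) := by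
    rw [← zpow_add₀ hqne, ← zpow_add₀ hqne, ← zpow_add₀ hqne]
    congr 1
    push_cast
    ring
  have lhs_eq : q ^ (-(2 * ((1 + s : ℕ) : ℤ) ^ 2) + ((1 + s : ℕ) : ℤ)) / qPoch (q ^ (-2 : ℤ)) (q ^ (-2 : ℤ)) s
        * (qPoch (q ^ (-(2 * ((1 + s : ℕ) : ℤ)))) (q ^ (-2 : ℤ)) (m - 1 - s)
            / qPoch (q ^ (-2 : ℤ)) (q ^ (-2 : ℤ)) (m - 1 - s))
        * q ^ (-(m : ℤ) + ((1 + s : ℕ) : ℤ))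
      = (q ^ (-(2 * ((1 + s : ℕ) : ℤ) ^ 2) + ((1 + s : ℕ) : ℤ))
          * qPoch (q ^ (-(2 * ((1 + s : ℕ) : ℤ)))) (q ^ (-2 : ℤ)) (m - 1 - s)
          * q ^ (-(m : ℤ) + ((1 + s : ℕ) : ℤ)))
        / (qPoch (q ^ (-2 : ℤ)) (q ^ (-2 : ℤ)) s * qPoch (q ^ (-2 : ℤ)) (q ^ (-2 : ℤ)) (m - 1 - s)) := by
    ring
  have rhs_eq : q ^ (-(m : ℤ)) * ((-1 : ℝ) ^ s
          * (qPoch (q ^ (2 * (m : ℤ) - 2)) (q ^ (-2 : ℤ)) s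
              / (qPoch (q ^ (-2 : ℤ)) (q ^ (-2 : ℤ)) s) ^ 2)
          * q ^ (-(s : ℤ) ^ 2 - s - 2 * s * m))
      = (q ^ (-(m : ℤ)) * (-1 : ℝ) ^ s * qPoch (q ^ (2 * (m : ℤ) - 2)) (q ^ (-2 : ℤ)) s
          * q ^ (-(s : ℤ) ^ 2 - (s:ℤ) - 2 * s * m))
        / (qPoch (q ^ (-2 : ℤ)) (q ^ (-2 : ℤ)) s) ^ 2 := by
    ring
  rw [lhs_eq, rhs_eq, div_eq_div_iff (mul_ne_zero hPs hPt) (pow_ne_zero 2 hPs)]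
  linear_combination
    (qPoch (q ^ (-(2 * ((1 + s : ℕ) : ℤ)))) (q ^ (-2 : ℤ)) (m - 1 - s)
      * (qPoch (q ^ (-2 : ℤ)) (q ^ (-2 : ℤ)) s) ^ 2) * e1
    + (q ^ (-(m : ℤ)) * q ^ (2 * (s:ℤ) * m - (s:ℤ) ^ 2 - s) * q ^ (-(s : ℤ) ^ 2 - (s:ℤ) - 2 * s * m)
        * qPoch (q ^ (-2 : ℤ)) (q ^ (-2 : ℤ)) s) * hsplit
    - (q ^ (-(m : ℤ)) * (-1:ℝ) ^ s * q ^ (-(s : ℤ) ^ 2 - (s:ℤ) - 2 * s * m)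
        * qPoch (q ^ (-2 : ℤ)) (q ^ (-2 : ℤ)) s) * hflip
    - (q ^ (-(m : ℤ)) * q ^ (2 * (s:ℤ) * m - (s:ℤ) ^ 2 - s) * q ^ (-(s : ℤ) ^ 2 - (s:ℤ) - 2 * s * m)
        * qPoch (q ^ (-2 : ℤ)) (q ^ (-2 : ℤ)) s
        * qPoch (q ^ (-2 : ℤ)) (q ^ (-2 : ℤ)) (m - 1)) * hu
end

section
/- Let q be a real number with q > 1 and m ≥ 1 an integer. For 1 ≤ k ≤ m define b2_k = q^{-2k^2+k} / (q^{-2};q^{-2})_{k-1} · ( (q^{-2k};q^{-2})_{m-k} / (q^{-2};q^{-2})_{m-k} ) · q^{-m+k}. Then Σ_{k=1}^{m} b2_k = q^{-m} · Σ_{i=1}^{m} (-1)^{i-1} q^{-i(i+1)} q^{2i} / (1/q^2; 1/q^2)_{m-i}. -/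
namespace Anz

noncomputable def PP (Q : ℝ) (n : ℕ) : ℝ := qPoch Q Q n
noncomputable def cc (Q : ℝ) (n j : ℕ) : ℝ := (-1) ^ j * Q ^ (j * (j + 1) / 2) / PP Q (n - j)
noncomputable def aa (Q : ℝ) (n j : ℕ) : ℝ := Q ^ (j ^ 2 + j) * PP Q n / (PP Q j ^ 2 * PP Q (n - j))
noncomputable def CC (Q : ℝ) (n : ℕ) : ℝ := ∑ j ∈ Finset.range (n + 1), cc Q n j
noncomputable def AA (Q : ℝ) (n : ℕ) : ℝ := ∑ j ∈ Finset.range (n + 1), aa Q n j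
noncomputable def gC (Q : ℝ) (n j : ℕ) : ℝ := Q ^ (2 * (n - j)) * (Q ^ j - 1) * cc Q n j
noncomputable def hA (Q : ℝ) (n j : ℕ) : ℝ := -(Q ^ (2 * (n - j)) * (1 - Q ^ j) ^ 2 * aa Q n j)

variable {Q : ℝ} (hQ0 : 0 < Q) (hQ1 : Q < 1)

lemma PP_zero : PP Q 0 = 1 := by simp [PP, qPoch]

lemma PP_succ (n : ℕ) : PP Q (n + 1) = PP Q n * (1 - Q ^ (n + 1)) := by
  rw [PP, qPoch, Finset.prod_range_succ, ← pow_succ']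
  rfl

lemma PP_one : PP Q 1 = 1 - Q := by rw [show (1:ℕ) = 0 + 1 from rfl, PP_succ, PP_zero]; ring

lemma PP_split (Q : ℝ) (s t : ℕ) : PP Q (s + t) = PP Q s * qPoch (Q ^ (s + 1)) Q t := by
  simp only [PP, qPoch]
  rw [Finset.prod_range_add]
  congr 1
  refine Finset.prod_congr rfl fun i _ => ?_
  rw [pow_add, pow_succ]
  ring

include hQ0 hQ1 in
lemma one_sub_pos (n : ℕ) : 0 < 1 - Q ^ (n + 1) := by
  have : Q ^ (n + 1) < 1 := pow_lt_one₀ hQ0.le hQ1 (Nat.succ_ne_zero n)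
  linarith

include hQ0 hQ1 in
lemma one_sub_ne (n : ℕ) : 1 - Q ^ (n + 1) ≠ 0 := (one_sub_pos hQ0 hQ1 n).ne'

include hQ0 hQ1 in
lemma PP_pos (n : ℕ) : 0 < PP Q n := by
  induction n with
  | zero => simp [PP_zero]
  | succ k ih => rw [PP_succ]; exact mul_pos ih (one_sub_pos hQ0 hQ1 k)

include hQ0 hQ1 in
lemma PP_ne (n : ℕ) : PP Q n ≠ 0 := (PP_pos hQ0 hQ1 n).ne'

include hQ0 hQ1 in
lemma certC (j k : ℕ) :
    (1 - Q ^ (j + k + 2)) * cc Q (j + k + 2) j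
      - ((1 - Q ^ (j + k + 2)) ^ 2 + Q) * cc Q (j + k + 1) j
      - (Q ^ (j + k + 2) - Q) * cc Q (j + k) j
    = gC Q (j + k + 2) (j + 1) - gC Q (j + k + 2) j := by
  have s1 : j + k + 2 - j = k + 2 := by omega
  have s2 : j + k + 1 - j = k + 1 := by omega
  have s3 : j + k - j = k := by omega
  have s4 : j + k + 2 - (j + 1) = k + 1 := by omega
  simp only [cc, gC, s1, s2, s3, s4]
  rw [PP_succ, PP_succ]  -- PP (k+2) = PP (k+1) * ..., PP(k+1) = PP k * ...
  have e1 : Q ^ (j + k + 2) = Q ^ j * Q ^ k * Q ^ 2 := by rw [pow_add, pow_add]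
  have e2 : Q ^ (k + 1) = Q ^ k * Q := pow_succ _ _
  have e3 : Q ^ (k + 2) = Q ^ k * Q ^ 2 := pow_add _ _ _
  have e5 : Q ^ (2 * (k + 1)) = (Q ^ k) ^ 2 * Q ^ 2 := by
    rw [show 2 * (k + 1) = k + k + 2 by ring, pow_add, pow_add]; ring
  have e6 : Q ^ (2 * (k + 2)) = (Q ^ k) ^ 2 * Q ^ 4 := by
    rw [show 2 * (k + 2) = k + k + 4 by ring, pow_add, pow_add]; ring
  have e7 : Q ^ ((j + 1) * (j + 1 + 1) / 2) = Q ^ (j * (j + 1) / 2) * (Q ^ j * Q) := by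
    have hd : 2 ∣ j * (j + 1) := (Nat.even_mul_succ_self j).two_dvd
    have h2 : (j + 1) * (j + 1 + 1) = j * (j + 1) + 2 * (j + 1) := by ring
    rw [show (j + 1) * (j + 1 + 1) / 2 = j * (j + 1) / 2 + (j + 1) by omega, pow_add, pow_succ]
  have e8 : (-1 : ℝ) ^ (j + 1) = (-1) ^ j * (-1) := pow_succ _ _
  have e4 : Q ^ (j + 1) = Q ^ j * Q := pow_succ _ _
  rw [e1, e2, e3, e5, e6, e7, e8, e4]
  have n1 : (1 : ℝ) - Q ^ k * Q ≠ 0 := e2 ▸ one_sub_ne hQ0 hQ1 k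
  have n2 : (1 : ℝ) - Q ^ k * Q ^ 2 ≠ 0 := e3 ▸ one_sub_ne hQ0 hQ1 (k + 1)
  have n3 : PP Q k ≠ 0 := PP_ne hQ0 hQ1 k
  field_simp
  ring

include hQ0 hQ1 in
lemma certA (j k : ℕ) :
    (1 - Q ^ (j + k + 2)) *
      ((1 - Q ^ (j + k + 2)) * aa Q (j + k + 2) j
        - ((1 - Q ^ (j + k + 2)) ^ 2 + Q) * aa Q (j + k + 1) j
        - (Q ^ (j + k + 2) - Q) * aa Q (j + k) j)
    = hA Q (j + k + 2) (j + 1) - hA Q (j + k + 2) j := by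
  have s1 : j + k + 2 - j = k + 2 := by omega
  have s2 : j + k + 1 - j = k + 1 := by omega
  have s3 : j + k - j = k := by omega
  have s4 : j + k + 2 - (j + 1) = k + 1 := by omega
  simp only [aa, hA, s1, s2, s3, s4]
  rw [show j + k + 2 = (j + k + 1) + 1 by ring, PP_succ (j + k + 1), PP_succ (j + k),
    PP_succ (k + 1), PP_succ k, PP_succ j]
  have e1 : Q ^ (j + k + 1 + 1) = Q ^ j * Q ^ k * Q ^ 2 := by
    rw [show j + k + 1 + 1 = j + (k + 2) by ring, pow_add, pow_add]; ring
  have e1b : Q ^ (j + k + 1) = Q ^ j * Q ^ k * Q := by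
    rw [show j + k + 1 = j + (k + 1) by ring, pow_add, pow_succ]; ring
  have e2 : Q ^ (k + 1) = Q ^ k * Q := pow_succ _ _
  have e3 : Q ^ (k + 2) = Q ^ k * Q ^ 2 := pow_add _ _ _
  have e5 : Q ^ (2 * (k + 1)) = (Q ^ k) ^ 2 * Q ^ 2 := by
    rw [show 2 * (k + 1) = k + k + 2 by ring, pow_add, pow_add]; ring
  have e6 : Q ^ (2 * (k + 2)) = (Q ^ k) ^ 2 * Q ^ 4 := by
    rw [show 2 * (k + 2) = k + k + 4 by ring, pow_add, pow_add]; ring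
  have e9 : Q ^ ((j + 1) ^ 2 + (j + 1)) = Q ^ (j ^ 2 + j) * ((Q ^ j) ^ 2 * Q ^ 2) := by
    rw [show (j + 1) ^ 2 + (j + 1) = (j ^ 2 + j) + (j + j + 2) by ring, pow_add, pow_add,
      pow_add]; ring
  have e4 : Q ^ (j + 1) = Q ^ j * Q := pow_succ _ _
  rw [e1, e1b, e2, e3, e5, e6, e9, e4]
  have n1 : (1 : ℝ) - Q ^ k * Q ≠ 0 := e2 ▸ one_sub_ne hQ0 hQ1 k
  have n2 : (1 : ℝ) - Q ^ k * Q ^ 2 ≠ 0 := e3 ▸ one_sub_ne hQ0 hQ1 (k + 1)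
  have n3 : PP Q k ≠ 0 := PP_ne hQ0 hQ1 k
  have n4 : PP Q j ≠ 0 := PP_ne hQ0 hQ1 j
  have n5 : (1 : ℝ) - Q ^ j * Q ≠ 0 := e4 ▸ one_sub_ne hQ0 hQ1 j
  field_simp
  ring

include hQ0 hQ1 in
lemma bndC (n : ℕ) :
    gC Q (n + 2) (n + 1)
      + (1 - Q ^ (n + 2)) * (cc Q (n + 2) (n + 1) + cc Q (n + 2) (n + 2))
      - ((1 - Q ^ (n + 2)) ^ 2 + Q) * cc Q (n + 1) (n + 1) = 0 := by
  have s1 : n + 2 - (n + 1) = 1 := by omega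
  have s2 : n + 2 - (n + 2) = 0 := by omega
  have s3 : n + 1 - (n + 1) = 0 := by omega
  simp only [gC, cc, s1, s2, s3, PP_zero, PP_one]
  have hd : 2 ∣ (n + 1) * (n + 2) := (Nat.even_mul_succ_self (n + 1)).two_dvd
  have h2 : (n + 2) * (n + 2 + 1) = (n + 1) * (n + 1 + 1) + 2 * (n + 2) := by ring
  have e7 : Q ^ ((n + 2) * (n + 2 + 1) / 2)
      = Q ^ ((n + 1) * (n + 1 + 1) / 2) * (Q ^ (n + 1) * Q) := by
    rw [show (n + 2) * (n + 2 + 1) / 2 = (n + 1) * (n + 1 + 1) / 2 + (n + 2) by omega,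
      pow_add, pow_succ]
  have e1 : Q ^ (n + 2) = Q ^ (n + 1) * Q := pow_succ _ _
  have e8 : (-1 : ℝ) ^ (n + 2) = (-1) ^ (n + 1) * (-1) := pow_succ _ _
  rw [e7, e1, e8]
  have n1 : (1 : ℝ) - Q ≠ 0 := by have := one_sub_ne hQ0 hQ1 0; rwa [pow_one] at this
  field_simp
  ring

include hQ0 hQ1 in
lemma recC (n : ℕ) :
    (1 - Q ^ (n + 2)) * CC Q (n + 2)
      = ((1 - Q ^ (n + 2)) ^ 2 + Q) * CC Q (n + 1) + (Q ^ (n + 2) - Q) * CC Q n := by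
  have tel := Finset.sum_range_sub (gC Q (n + 2)) (n + 1)
  have g0 : gC Q (n + 2) 0 = 0 := by simp [gC]
  rw [g0, sub_zero] at tel
  have key : ∑ j ∈ Finset.range (n + 1),
      ((1 - Q ^ (n + 2)) * cc Q (n + 2) j
        - ((1 - Q ^ (n + 2)) ^ 2 + Q) * cc Q (n + 1) j
        - (Q ^ (n + 2) - Q) * cc Q n j) = gC Q (n + 2) (n + 1) := by
    rw [← tel]
    refine Finset.sum_congr rfl fun j hj => ?_
    obtain ⟨k, rfl⟩ : ∃ k, n = j + k :=
      ⟨n - j, by have := Finset.mem_range.mp hj; omega⟩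
    exact certC hQ0 hQ1 j k
  have expand : ∑ j ∈ Finset.range (n + 1),
      ((1 - Q ^ (n + 2)) * cc Q (n + 2) j
        - ((1 - Q ^ (n + 2)) ^ 2 + Q) * cc Q (n + 1) j
        - (Q ^ (n + 2) - Q) * cc Q n j)
      = (1 - Q ^ (n + 2)) * (∑ j ∈ Finset.range (n + 1), cc Q (n + 2) j)
        - ((1 - Q ^ (n + 2)) ^ 2 + Q) * (∑ j ∈ Finset.range (n + 1), cc Q (n + 1) j)
        - (Q ^ (n + 2) - Q) * (∑ j ∈ Finset.range (n + 1), cc Q n j) := by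
    rw [Finset.sum_sub_distrib, Finset.sum_sub_distrib, ← Finset.mul_sum, ← Finset.mul_sum,
      ← Finset.mul_sum]
  rw [expand] at key
  have c2 : CC Q (n + 2)
      = (∑ j ∈ Finset.range (n + 1), cc Q (n + 2) j)
        + cc Q (n + 2) (n + 1) + cc Q (n + 2) (n + 2) := by
    rw [CC, Finset.sum_range_succ, Finset.sum_range_succ]
  have c1 : CC Q (n + 1)
      = (∑ j ∈ Finset.range (n + 1), cc Q (n + 1) j) + cc Q (n + 1) (n + 1) := by
    rw [CC, Finset.sum_range_succ]
  rw [c2, c1, CC]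
  linear_combination key + bndC hQ0 hQ1 n

include hQ0 hQ1 in
lemma bndA (n : ℕ) :
    hA Q (n + 2) (n + 1)
      + (1 - Q ^ (n + 2)) *
        ((1 - Q ^ (n + 2)) * (aa Q (n + 2) (n + 1) + aa Q (n + 2) (n + 2))
          - ((1 - Q ^ (n + 2)) ^ 2 + Q) * aa Q (n + 1) (n + 1)) = 0 := by
  have s1 : n + 2 - (n + 1) = 1 := by omega
  have s2 : n + 2 - (n + 2) = 0 := by omega
  have s3 : n + 1 - (n + 1) = 0 := by omega
  simp only [hA, aa, s1, s2, s3, PP_zero, PP_one]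
  rw [PP_succ (n + 1)]
  have e9 : Q ^ ((n + 2) ^ 2 + (n + 2))
      = Q ^ ((n + 1) ^ 2 + (n + 1)) * ((Q ^ (n + 1)) ^ 2 * Q ^ 2) := by
    rw [show (n + 2) ^ 2 + (n + 2) = ((n + 1) ^ 2 + (n + 1)) + (n + 1 + (n + 1) + 2) by ring,
      pow_add, pow_add, pow_add]; ring
  have e1 : Q ^ (n + 2) = Q ^ (n + 1) * Q := pow_succ _ _
  rw [e9, e1]
  have n1 : (1 : ℝ) - Q ≠ 0 := by have := one_sub_ne hQ0 hQ1 0; rwa [pow_one] at this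
  have n2 : PP Q (n + 1) ≠ 0 := PP_ne hQ0 hQ1 (n + 1)
  have n3 : (1 : ℝ) - Q ^ (n + 1) * Q ≠ 0 := e1 ▸ one_sub_ne hQ0 hQ1 (n + 1)
  field_simp
  ring

include hQ0 hQ1 in
lemma recA (n : ℕ) :
    (1 - Q ^ (n + 2)) * AA Q (n + 2)
      = ((1 - Q ^ (n + 2)) ^ 2 + Q) * AA Q (n + 1) + (Q ^ (n + 2) - Q) * AA Q n := by
  have hx : (1 : ℝ) - Q ^ (n + 2) ≠ 0 := one_sub_ne hQ0 hQ1 (n + 1)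
  apply mul_left_cancel₀ hx
  have tel := Finset.sum_range_sub (hA Q (n + 2)) (n + 1)
  have g0 : hA Q (n + 2) 0 = 0 := by simp [hA]
  rw [g0, sub_zero] at tel
  have key : ∑ j ∈ Finset.range (n + 1),
      ((1 - Q ^ (n + 2)) *
        ((1 - Q ^ (n + 2)) * aa Q (n + 2) j
          - ((1 - Q ^ (n + 2)) ^ 2 + Q) * aa Q (n + 1) j
          - (Q ^ (n + 2) - Q) * aa Q n j)) = hA Q (n + 2) (n + 1) := by
    rw [← tel]
    refine Finset.sum_congr rfl fun j hj => ?_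
    obtain ⟨k, rfl⟩ : ∃ k, n = j + k :=
      ⟨n - j, by have := Finset.mem_range.mp hj; omega⟩
    exact certA hQ0 hQ1 j k
  have expand : ∑ j ∈ Finset.range (n + 1),
      ((1 - Q ^ (n + 2)) *
        ((1 - Q ^ (n + 2)) * aa Q (n + 2) j
          - ((1 - Q ^ (n + 2)) ^ 2 + Q) * aa Q (n + 1) j
          - (Q ^ (n + 2) - Q) * aa Q n j))
      = (1 - Q ^ (n + 2)) *
          ((1 - Q ^ (n + 2)) * (∑ j ∈ Finset.range (n + 1), aa Q (n + 2) j)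
            - ((1 - Q ^ (n + 2)) ^ 2 + Q) * (∑ j ∈ Finset.range (n + 1), aa Q (n + 1) j)
            - (Q ^ (n + 2) - Q) * (∑ j ∈ Finset.range (n + 1), aa Q n j)) := by
    rw [← Finset.mul_sum, Finset.sum_sub_distrib, Finset.sum_sub_distrib, ← Finset.mul_sum,
      ← Finset.mul_sum, ← Finset.mul_sum]
  rw [expand] at key
  have c2 : AA Q (n + 2)
      = (∑ j ∈ Finset.range (n + 1), aa Q (n + 2) j)
        + aa Q (n + 2) (n + 1) + aa Q (n + 2) (n + 2) := by
    rw [AA, Finset.sum_range_succ, Finset.sum_range_succ]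
  have c1 : AA Q (n + 1)
      = (∑ j ∈ Finset.range (n + 1), aa Q (n + 1) j) + aa Q (n + 1) (n + 1) := by
    rw [AA, Finset.sum_range_succ]
  rw [c2, c1, AA]
  linear_combination key + bndA hQ0 hQ1 n

include hQ0 hQ1 in
lemma AC : ∀ n, AA Q n = CC Q n := by
  intro n
  induction n using Nat.twoStepInduction with
  | zero => simp [AA, CC, aa, cc, PP_zero]
  | one =>
    have n1 : (1 : ℝ) - Q ≠ 0 := by have := one_sub_ne hQ0 hQ1 0; rwa [pow_one] at this
    simp only [AA, CC, aa, cc, Finset.sum_range_succ, Finset.sum_range_zero]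
    norm_num [PP_zero, PP_one]
    field_simp
    ring
  | more n ih1 ih2 =>
    have hx : (1 : ℝ) - Q ^ (n + 2) ≠ 0 := one_sub_ne hQ0 hQ1 (n + 1)
    apply mul_left_cancel₀ hx
    rw [recA hQ0 hQ1 n, recC hQ0 hQ1 n, ih1, ih2]

end Anz

open Anz in
theorem anzanello_b2_alt_sum (q : ℝ) (hq : 1 < q) (m : ℕ) (hm : 1 ≤ m) :
    ∑ k ∈ Finset.Icc 1 m,
      q ^ (-(2 * (k : ℤ) ^ 2) + k) / qPoch (q ^ (-2 : ℤ)) (q ^ (-2 : ℤ)) (k - 1)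
        * (qPoch (q ^ (-(2 * (k : ℤ)))) (q ^ (-2 : ℤ)) (m - k)
            / qPoch (q ^ (-2 : ℤ)) (q ^ (-2 : ℤ)) (m - k))
        * q ^ (-(m : ℤ) + k)
    = q ^ (-(m : ℤ)) * ∑ i ∈ Finset.Icc 1 m,
        (-1 : ℝ) ^ (i - 1) * q ^ (-(i : ℤ) * (i + 1)) * q ^ (2 * i)
          / qPoch (q ^ (-2 : ℤ)) (q ^ (-2 : ℤ)) (m - i) := by
  obtain ⟨n, rfl⟩ : ∃ n, m = n + 1 := ⟨m - 1, by omega⟩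
  have hq0 : (0:ℝ) < q := lt_trans one_pos hq
  have hqne : q ≠ 0 := hq0.ne'
  have hQ0 : (0:ℝ) < q ^ (-2:ℤ) := zpow_pos hq0 _
  have hQ1 : q ^ (-2:ℤ) < 1 := by
    rw [show (-2:ℤ) = -(2:ℕ) by norm_num, zpow_neg, zpow_natCast]
    exact inv_lt_one_of_one_lt₀ (by nlinarith)
  rw [← Finset.Ico_add_one_right_eq_Icc, Finset.sum_Ico_eq_sum_range, Finset.sum_Ico_eq_sum_range,
    show n + 1 + 1 - 1 = n + 1 by omega]
  simp only [show ∀ t, qPoch (q ^ (-2:ℤ)) (q ^ (-2:ℤ)) t = PP (q ^ (-2:ℤ)) t from fun _ => rfl]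
  calc
    ∑ j ∈ Finset.range (n + 1),
        (q ^ (-(2 * ((1 + j : ℕ) : ℤ) ^ 2) + ((1 + j : ℕ) : ℤ))
            / PP (q ^ (-2 : ℤ)) (1 + j - 1)
          * (qPoch (q ^ (-(2 * ((1 + j : ℕ) : ℤ)))) (q ^ (-2 : ℤ)) (n + 1 - (1 + j))
              / PP (q ^ (-2 : ℤ)) (n + 1 - (1 + j)))
          * q ^ (-((n + 1 : ℕ) : ℤ) + ((1 + j : ℕ) : ℤ)))
      = q ^ (-((n + 1 : ℕ) : ℤ)) * AA (q ^ (-2:ℤ)) n := by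
        rw [AA, Finset.mul_sum]
        refine Finset.sum_congr rfl fun j hj => ?_
        have hjn : j ≤ n := by have := Finset.mem_range.mp hj; omega
        have s1 : 1 + j - 1 = j := by omega
        have s2 : n + 1 - (1 + j) = n - j := by omega
        rw [s1, s2]
        have hA1 : q ^ (-(2 * ((1 + j : ℕ) : ℤ))) = (q ^ (-2:ℤ)) ^ (j + 1) := by
          rw [← zpow_natCast (q ^ (-2:ℤ)) (j + 1), ← zpow_mul]
          congr 1; push_cast; ring
        have hA2 : q ^ (-(2 * ((1 + j : ℕ) : ℤ) ^ 2) + ((1 + j : ℕ) : ℤ))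
              * q ^ (-((n + 1 : ℕ) : ℤ) + ((1 + j : ℕ) : ℤ))
            = q ^ (-((n + 1 : ℕ) : ℤ)) * (q ^ (-2:ℤ)) ^ (j ^ 2 + j) := by
          rw [← zpow_add₀ hqne, ← zpow_natCast (q ^ (-2:ℤ)) (j ^ 2 + j), ← zpow_mul,
            ← zpow_add₀ hqne]
          congr 1; push_cast; ring
        have hsplit : PP (q ^ (-2:ℤ)) n
            = PP (q ^ (-2:ℤ)) j * qPoch ((q ^ (-2:ℤ)) ^ (j + 1)) (q ^ (-2:ℤ)) (n - j) := by
          conv_lhs => rw [show n = j + (n - j) by omega]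
          exact PP_split _ j (n - j)
        have hW : qPoch ((q ^ (-2:ℤ)) ^ (j + 1)) (q ^ (-2:ℤ)) (n - j)
            = PP (q ^ (-2:ℤ)) n / PP (q ^ (-2:ℤ)) j := by
          rw [hsplit, mul_div_cancel_left₀ _ (PP_ne hQ0 hQ1 j)]
        rw [hA1, hW, aa]
        linear_combination
          (PP (q ^ (-2:ℤ)) n / (PP (q ^ (-2:ℤ)) j ^ 2 * PP (q ^ (-2:ℤ)) (n - j))) * hA2
    _ = q ^ (-((n + 1 : ℕ) : ℤ)) * CC (q ^ (-2:ℤ)) n := by rw [AC hQ0 hQ1 n]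
    _ = _ := by
        rw [CC]
        congr 1
        refine Finset.sum_congr rfl fun j hj => ?_
        have s1 : 1 + j - 1 = j := by omega
        have s2 : n + 1 - (1 + j) = n - j := by omega
        rw [s1, s2, cc]
        have hB : q ^ (-((1 + j : ℕ) : ℤ) * (((1 + j : ℕ) : ℤ) + 1)) * q ^ (2 * (1 + j))
            = (q ^ (-2:ℤ)) ^ (j * (j + 1) / 2) := by
          rw [← zpow_natCast q (2 * (1 + j)), ← zpow_add₀ hqne,
            ← zpow_natCast (q ^ (-2:ℤ)) (j * (j + 1) / 2), ← zpow_mul]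
          obtain ⟨t, ht⟩ : ∃ t, j * (j + 1) = 2 * t := (Nat.even_mul_succ_self j).two_dvd
          rw [show j * (j + 1) / 2 = t by omega]
          congr 1
          have ht' : (j : ℤ) * ((j : ℤ) + 1) = 2 * (t : ℤ) := by exact_mod_cast ht
          push_cast
          linear_combination -ht'
        rw [mul_assoc, hB]
end
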